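/- There is no transformation tr' mapping every ground HDLP Π to a ground positive DLP tr'(Π) that is modular, i.e., tr'(Π) = ⋃_{r ∈ Π} tr'({r}) for every ground HDLP Π, and satisfies property T1: for every ground HDLP Π that has an answer set, (i) for every answer set S' of tr'(Π), the set { l : inS(l) ∈ S' } is an answer set of Π, and (ii) for every answer set S of Π there is an answer set S' of tr'(Π) with S = { l : inS(l) ∈ S' }; here inS(·) is a fixed injective encoding of literals of the source language as atoms of the target language. -/

import Mathlib

open scoped Classical

namespace ASP

universe u v

/-- A ground literal: an atom together with a sign
(`true` for the atom itself, `false` for its strong negation `¬a`).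
The atom `|l|` of a literal `l` is its first component `l.1`. -/
abbrev Lit (α : Type u) : Type u := α × Bool

/-- A ground disjunctive rule, consisting of three finite sets of literals:
head, positive body and negative body. -/
structure Rule (α : Type u) : Type u where
  head : Finset (Lit α)
  pbody : Finset (Lit α)
  nbody : Finset (Lit α)
deriving DecidableEq

variable {α : Type u}

/-- A set of literals is consistent if it contains no atom together with
its strong negation. -/
def Consistent (S : Set (Lit α)) : Prop :=
  ∀ a : α, ¬((a, true) ∈ S ∧ (a, false) ∈ S)

/-- `S` satisfies a rule `r`: the head intersects `S` whenever
`pbody(r) ⊆ S` and `nbody(r) ∩ S = ∅`. -/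
def SatRule (S : Set (Lit α)) (r : Rule α) : Prop :=
  ((∀ l ∈ r.pbody, l ∈ S) ∧ (∀ l ∈ r.nbody, l ∉ S)) → ∃ l ∈ r.head, l ∈ S

/-- Answer sets of a positive program: `⊆`-minimal consistent sets of
literals satisfying all rules. -/
def IsAnswerSetPos (P : Set (Rule α)) (S : Set (Lit α)) : Prop :=
  Consistent S ∧ (∀ r ∈ P, SatRule S r) ∧
    ∀ T : Set (Lit α), Consistent T → (∀ r ∈ P, SatRule T r) → T ⊆ S → T = S

/-- The reduct `P^S` of a program w.r.t. a set of literals `S`. -/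
def reduct (P : Set (Rule α)) (S : Set (Lit α)) : Set (Rule α) :=
  {x | ∃ r ∈ P, (∀ l ∈ r.nbody, l ∉ S) ∧ x = ⟨r.head, r.pbody, ∅⟩}

/-- `S` is an answer set of `P` iff `S` is an answer set of the positive
program `P^S`. -/
def IsAnswerSet (P : Set (Rule α)) (S : Set (Lit α)) : Prop :=
  IsAnswerSetPos (reduct P S) S

/-- `Lit(P)`: the literals occurring in a program. -/
def litsOf (P : Set (Rule α)) : Set (Lit α) :=
  {l | ∃ r ∈ P, l ∈ r.head ∨ l ∈ r.pbody ∨ l ∈ r.nbody}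

/-- Edges of the positive dependency graph: from each head literal of a
rule to each of its positive body literals. -/
def DepEdge (P : Set (Rule α)) (l l' : Lit α) : Prop :=
  ∃ r ∈ P, l ∈ r.head ∧ l' ∈ r.pbody

/-- Head-cycle freeness: no two distinct literals occurring together in
some rule head lie on a common cycle of the positive dependency graph. -/
def HeadCycleFree (P : Set (Rule α)) : Prop :=
  ∀ r ∈ P, ∀ l ∈ r.head, ∀ l' ∈ r.head, l ≠ l' →
    ¬(Relation.ReflTransGen (DepEdge P) l l' ∧ Relation.ReflTransGen (DepEdge P) l' l)

/-- `P ∪ S`: the program `P` extended with the literals of `S` as facts. -/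
def withFacts (P : Set (Rule α)) (S : Set (Lit α)) : Set (Rule α) :=
  P ∪ {x | ∃ l ∈ S, x = ⟨{l}, ∅, ∅⟩}

/-! Take distinct literals `l`, `l'` (here `a` and `¬a`) and the HCF programs `P₁ = {l ← not l'}` and
`P₂ = P₁ ∪ {l'.}`, whose unique answer sets are `{l}` and `{l'}`. By T1(ii) some answer set `S'` of
`tr'(P₂)` encodes `{l'}`. By modularity `tr'(P₁) ⊆ tr'(P₂)`, so `S'` is a consistent model of the
positive program `tr'(P₁)` and hence contains a minimal one `M`, an answer set of `tr'(P₁)`. By T1(i)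
`M` encodes an answer set of `P₁`, so it contains `inS(l)`, and then so does `S'`: a contradiction,
since positive programs are monotone while `P₁ ⊆ P₂` changes the answer set non-monotonically. -/

lemma Consistent.mono {S T : Set (Lit α)} (hS : Consistent S) (hTS : T ⊆ S) : Consistent T :=
  fun a ⟨hpos, hneg⟩ => hS a ⟨hTS hpos, hTS hneg⟩

lemma consistent_singleton (l : Lit α) : Consistent ({l} : Set (Lit α)) := by
  rintro a ⟨hpos, hneg⟩
  rw [Set.mem_singleton_iff] at hpos hneg
  simp [← hneg] at hpos

lemma headCycleFree_of_forall_pbody_eq_empty {P : Set (Rule α)} (hP : ∀ r ∈ P, r.pbody = ∅) :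
    HeadCycleFree P := by
  rintro r - l - l' - hne ⟨hll', -⟩
  rcases hll'.cases_head with heq | ⟨_, ⟨r', hr', -, hmem⟩, -⟩
  · exact hne heq
  · simp [hP r' hr'] at hmem

section AnswerSets

variable {P : Set (Rule α)} {S : Set (Lit α)}

lemma Rule.mk_head_pbody_empty {r : Rule α} (h : r.nbody = ∅) :
    (⟨r.head, r.pbody, ∅⟩ : Rule α) = r := by
  cases r
  subst h
  rfl

lemma reduct_eq_self (hP : ∀ r ∈ P, r.nbody = ∅) : reduct P S = P := by
  ext x
  constructor
  · rintro ⟨r, hr, -, rfl⟩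
    rwa [Rule.mk_head_pbody_empty (hP r hr)]
  · intro hx
    exact ⟨x, hx, by simp [hP x hx], (Rule.mk_head_pbody_empty (hP x hx)).symm⟩

lemma isAnswerSet_iff_isAnswerSetPos (hP : ∀ r ∈ P, r.nbody = ∅) :
    IsAnswerSet P S ↔ IsAnswerSetPos P S := by
  rw [IsAnswerSet, reduct_eq_self hP]

lemma IsAnswerSet.satRule (hS : IsAnswerSet P S) {r : Rule α} (hr : r ∈ P) : SatRule S r :=
  fun ⟨hp, hn⟩ => hS.2.1 ⟨r.head, r.pbody, ∅⟩ ⟨r, hr, hn, rfl⟩ ⟨hp, by simp⟩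

/-- Restricting `S` to the heads of `P` still satisfies `P^S`, so minimality applies. -/
lemma IsAnswerSet.subset_heads (hS : IsAnswerSet P S) : S ⊆ {l | ∃ r ∈ P, l ∈ r.head} := by
  have hres : S ∩ {l | ∃ r ∈ P, l ∈ r.head} = S := by
    refine hS.2.2 _ (hS.1.mono Set.inter_subset_left) ?_ Set.inter_subset_left
    rintro _ ⟨r, hr, hn, rfl⟩ ⟨hp, -⟩
    obtain ⟨l, hl, hlS⟩ := hS.2.1 _ ⟨r, hr, hn, rfl⟩ ⟨fun l hl => (hp l hl).1, by simp⟩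
    exact ⟨l, hl, hlS, r, hr, hl⟩
  exact hres ▸ Set.inter_subset_right

lemma isAnswerSet_singleton {l : Lit α} (hsat : ∀ r ∈ P, SatRule {l} r) {r : Rule α} (hr : r ∈ P)
    (hp : r.pbody = ∅) (hn : l ∉ r.nbody) : IsAnswerSet P {l} := by
  refine ⟨consistent_singleton l, ?_, fun T _ hT hTl => ?_⟩
  · rintro _ ⟨r', hr', hn', rfl⟩ ⟨hp', -⟩
    exact hsat r' hr' ⟨hp', hn'⟩
  · have hnT : ∀ x ∈ r.nbody, x ∉ ({l} : Set (Lit α)) := fun x hx hxl => hn (hxl ▸ hx)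
    obtain ⟨x, -, hxT⟩ := hT _ ⟨r, hr, hnT, rfl⟩ ⟨by simp [hp], by simp⟩
    exact (Set.subset_singleton_iff_eq.mp hTl).resolve_left (Set.nonempty_of_mem hxT).ne_empty

end AnswerSets

section PositivePrograms

/-- The head is finite, so the head literals missing from `⋂₀ c` are all missed by a single
member of the chain. -/
lemma satRule_sInter {c : Set (Set (Lit α))} (hc : IsChain (· ⊆ ·) c) (hne : c.Nonempty)
    {r : Rule α} (hr : r.nbody = ∅) (hsat : ∀ T ∈ c, SatRule T r) : SatRule (⋂₀ c) r := by
  rintro ⟨hp, -⟩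
  by_contra hmiss
  have hcover : (r.head : Set (Lit α)) ⊆ ⋃ T ∈ c, Tᶜ := by
    intro l hl
    have hl' : l ∉ ⋂₀ c := fun hlc => hmiss ⟨l, hl, hlc⟩
    simpa [Set.mem_sInter] using hl'
  have hdir : DirectedOn (fun T T' : Set (Lit α) => Tᶜ ⊆ T'ᶜ) c := fun T hT T' hT' =>
    (hc.total hT hT').elim (fun h => ⟨T, hT, subset_rfl, Set.compl_subset_compl.mpr h⟩)
      fun h => ⟨T', hT', Set.compl_subset_compl.mpr h, subset_rfl⟩
  obtain ⟨T, hT, hTr⟩ := hdir.exists_mem_subset_of_finset_subset_biUnion hne hcover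
  obtain ⟨l, hl, hlT⟩ := hsat T hT ⟨fun l hl => Set.sInter_subset_of_mem hT (hp l hl), by simp [hr]⟩
  exact hTr hl hlT

lemma exists_isAnswerSet_subset {P : Set (Rule α)} (hP : ∀ r ∈ P, r.nbody = ∅)
    {S : Set (Lit α)} (hS : Consistent S) (hsat : ∀ r ∈ P, SatRule S r) :
    ∃ M ⊆ S, IsAnswerSet P M := by
  let models : Set (Set (Lit α)) := {T | Consistent T ∧ ∀ r ∈ P, SatRule T r}
  obtain ⟨M, hMS, hMmin⟩ := zorn_superset_nonempty models (fun c hcm hc hne => by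
    obtain ⟨T₀, hT₀⟩ := hne
    refine ⟨⋂₀ c, ⟨(hcm hT₀).1.mono (Set.sInter_subset_of_mem hT₀), fun r hr => ?_⟩,
      fun T hT => Set.sInter_subset_of_mem hT⟩
    exact satRule_sInter hc ⟨T₀, hT₀⟩ (hP r hr) fun T hT => (hcm hT).2 r hr) S ⟨hS, hsat⟩
  refine ⟨M, hMS, (isAnswerSet_iff_isAnswerSetPos hP).mpr ⟨hMmin.1.1, hMmin.1.2, ?_⟩⟩
  exact fun T hT hTsat hTM => le_antisymm hTM (hMmin.2 ⟨hT, hTsat⟩ hTM)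

end PositivePrograms

section Counterexample

variable {l l' : Lit α}

def negRule (l l' : Lit α) : Rule α := ⟨{l}, ∅, {l'}⟩

def fact (l : Lit α) : Rule α := ⟨{l}, ∅, ∅⟩

lemma isAnswerSet_negRule (h : l ≠ l') : IsAnswerSet {negRule l l'} {l} := by
  refine isAnswerSet_singleton ?_ rfl rfl (by simpa [negRule] using h)
  rintro r rfl -
  exact ⟨l, by simp [negRule], rfl⟩

lemma mem_of_isAnswerSet_negRule (h : l ≠ l') {S : Set (Lit α)}
    (hS : IsAnswerSet {negRule l l'} S) : l ∈ S := by
  have hl' : l' ∉ S := fun hl'S => by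
    obtain ⟨r, hr, hmem⟩ := hS.subset_heads hl'S
    rw [Set.mem_singleton_iff.mp hr] at hmem
    exact h (Finset.mem_singleton.mp hmem).symm
  obtain ⟨x, hx, hxS⟩ := hS.satRule rfl ⟨by simp [negRule], by simpa [negRule] using hl'⟩
  rwa [Finset.mem_singleton.mp hx] at hxS

lemma isAnswerSet_negRule_fact : IsAnswerSet {negRule l l', fact l'} {l'} := by
  refine isAnswerSet_singleton ?_ (Set.mem_insert_of_mem _ rfl) rfl (by simp [fact])
  rintro r (rfl | rfl) ⟨-, hn⟩
  · exact absurd rfl (hn l' (by simp [negRule]))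
  · exact ⟨l', by simp [fact], rfl⟩

end Counterexample

theorem statement5_general {α : Type u} {β : Type v} (a : α)
    (enc : Lit α → β) :
    ¬∃ tr' : Set (Rule α) → Set (Rule β),
      (∀ P : Set (Rule α), P.Finite → HeadCycleFree P →
        (tr' P).Finite ∧ (∀ r ∈ tr' P, r.nbody = ∅)) ∧
      (∀ P : Set (Rule α), P.Finite → HeadCycleFree P →
        tr' P = ⋃ r ∈ P, tr' {r}) ∧
      (∀ P : Set (Rule α), P.Finite → HeadCycleFree P →
        (∃ S, IsAnswerSet P S) →
        ((∀ S', IsAnswerSet (tr' P) S' →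
            IsAnswerSet P {l : Lit α | (enc l, true) ∈ S'}) ∧
         (∀ S, IsAnswerSet P S →
            ∃ S', IsAnswerSet (tr' P) S' ∧ S = {l : Lit α | (enc l, true) ∈ S'}))) := by
  rintro ⟨tr', hpos, hmod, hT1⟩
  set l : Lit α := (a, true)
  set l' : Lit α := (a, false)
  have hll' : l ≠ l' := by simp [l, l']
  set P₁ : Set (Rule α) := {negRule l l'}
  set P₂ : Set (Rule α) := {negRule l l', fact l'}
  have hP₁ : P₁.Finite ∧ HeadCycleFree P₁ :=
    ⟨Set.toFinite _, headCycleFree_of_forall_pbody_eq_empty (by rintro r rfl; rfl)⟩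
  have hP₂ : P₂.Finite ∧ HeadCycleFree P₂ :=
    ⟨Set.toFinite _, headCycleFree_of_forall_pbody_eq_empty (by rintro r (rfl | rfl) <;> rfl)⟩
  obtain ⟨S', hS', hS'l'⟩ := (hT1 P₂ hP₂.1 hP₂.2 ⟨_, isAnswerSet_negRule_fact⟩).2 _
    isAnswerSet_negRule_fact
  have hsub : tr' P₁ ⊆ tr' P₂ := by
    rw [hmod P₂ hP₂.1 hP₂.2]
    exact Set.subset_biUnion_of_mem (u := fun r => tr' {r}) (Set.mem_insert _ _)
  obtain ⟨M, hMS', hM⟩ := exists_isAnswerSet_subset (hpos P₁ hP₁.1 hP₁.2).2 hS'.1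
    fun r hr => hS'.satRule (hsub hr)
  have hlM : l ∈ {x : Lit α | (enc x, true) ∈ M} := mem_of_isAnswerSet_negRule hll'
    ((hT1 P₁ hP₁.1 hP₁.2 ⟨_, isAnswerSet_negRule hll'⟩).1 M hM)
  exact hll' (hS'l' ▸ hMS' hlM : l ∈ ({l'} : Set (Lit α)))

/-- There is no modular transformation of ground HDLPs into ground positive
DLPs satisfying property T1, where `enc` is a fixed injective encoding of
source literals as target atoms (so `inS(l) ∈ S'` reads `(enc l, true) ∈ S'`). -/
theorem statement5 {α : Type u} {β : Type v} (a b : α) (hab : a ≠ b)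
    (enc : Lit α → β) (hinj : Function.Injective enc) :
    ¬∃ tr' : Set (Rule α) → Set (Rule β),
      (∀ P : Set (Rule α), P.Finite → HeadCycleFree P →
        (tr' P).Finite ∧ (∀ r ∈ tr' P, r.nbody = ∅)) ∧
      (∀ P : Set (Rule α), P.Finite → HeadCycleFree P →
        tr' P = ⋃ r ∈ P, tr' {r}) ∧
      (∀ P : Set (Rule α), P.Finite → HeadCycleFree P →
        (∃ S, IsAnswerSet P S) →
        ((∀ S', IsAnswerSet (tr' P) S' →
            IsAnswerSet P {l : Lit α | (enc l, true) ∈ S'}) ∧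
         (∀ S, IsAnswerSet P S →
            ∃ S', IsAnswerSet (tr' P) S' ∧ S = {l : Lit α | (enc l, true) ∈ S'}))) :=
  statement5_general a enc

end ASP
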